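/- arXiv:1303.1288 — 2 statements merged into one kernel-verified Lean document; each statement's English description precedes it below -/
import Mathlib

section
/- The Clopper–Pearson interval has coverage at least 1-α: for every p ∈ (0,1), integers n ≥ 1, and α ∈ (0,1), if X ~ Binomial(n,p) and the (random) interval [p_L(X), p_U(X)] is defined by p_L(X) = unique solution of P(Bin(n,q) ≥ X) = α/2 in q (with p_L(0) = 0) and p_U(X) = unique solution of P(Bin(n,q) ≤ X) = α/2 in q (with p_U(n) = 1), then P(p_L(X) ≤ p ≤ p_U(X)) ≥ 1-α. -/
/-!
The interval misses `p` exactly when `p < p_L(X)` or `p_U(X) < p`. Let `X₀` be the least `X`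
with `p < p_L(X)`: the first event lies in `{X ≥ X₀}`, and since `q ↦ P(Bin(n,q) ≥ X₀)` is
nondecreasing, `P_p(X ≥ X₀) ≤ P_{p_L(X₀)}(X ≥ X₀) = α/2`. Symmetrically, with the largest `X`
such that `p_U(X) < p` and the nonincreasing lower tail, the second event has probability at
most `α/2`. The tails are monotone because the derivative of a partial sum of Bernstein
polynomials telescopes to a single Bernstein polynomial.
-/

open Finset Polynomial

theorem derivative_sum_range_bernsteinPolynomial (R : Type*) [CommRing R] (n ν : ℕ) :
    derivative (∑ k ∈ range (ν + 1), bernsteinPolynomial R n k) =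
      -(n * bernsteinPolynomial R (n - 1) ν) := by
  induction ν with
  | zero => simp [bernsteinPolynomial.derivative_zero]
  | succ ν ih =>
    rw [sum_range_succ, derivative_add, ih, bernsteinPolynomial.derivative_succ]
    ring

noncomputable def binomialLowerTail (n x : ℕ) (q : ℝ) : ℝ :=
  ∑ k ∈ range (x + 1), (n.choose k : ℝ) * q ^ k * (1 - q) ^ (n - k)

noncomputable def binomialUpperTail (n x : ℕ) (q : ℝ) : ℝ :=
  ∑ k ∈ Icc x n, (n.choose k : ℝ) * q ^ k * (1 - q) ^ (n - k)

theorem choose_mul_pow_mul_one_sub_pow_nonneg (n k : ℕ) {q : ℝ} (hq : q ∈ Set.Icc 0 1) :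
    0 ≤ (n.choose k : ℝ) * q ^ k * (1 - q) ^ (n - k) :=
  mul_nonneg (mul_nonneg (Nat.cast_nonneg _) (pow_nonneg hq.1 _))
    (pow_nonneg (sub_nonneg.2 hq.2) _)

theorem binomialLowerTail_eq_eval (n x : ℕ) (q : ℝ) :
    binomialLowerTail n x q = (∑ k ∈ range (x + 1), bernsteinPolynomial ℝ n k).eval q := by
  simp [binomialLowerTail, bernsteinPolynomial, eval_finsetSum]

theorem binomialLowerTail_self (n : ℕ) (q : ℝ) : binomialLowerTail n n q = 1 := by
  rw [binomialLowerTail_eq_eval, bernsteinPolynomial.sum, eval_one]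

theorem binomialLowerTail_add_binomialUpperTail_succ (n x : ℕ) (q : ℝ) :
    binomialLowerTail n x q + binomialUpperTail n (x + 1) q = 1 := by
  rcases le_or_gt x n with hx | hx
  · rw [← binomialLowerTail_self n q, binomialLowerTail, binomialLowerTail, binomialUpperTail,
      ← Ico_add_one_right_eq_Icc, sum_range_add_sum_Ico _ (by omega)]
  · have hvanish :
        ∀ k ∈ Ico (n + 1) (x + 1), (n.choose k : ℝ) * q ^ k * (1 - q) ^ (n - k) = 0 :=
      fun k hk => by simp [Nat.choose_eq_zero_of_lt (mem_Ico.1 hk).1]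
    rw [← binomialLowerTail_self n q, binomialLowerTail, binomialLowerTail, binomialUpperTail,
      Icc_eq_empty (by omega), sum_empty, add_zero,
      ← sum_range_add_sum_Ico _ (by omega : n + 1 ≤ x + 1), sum_eq_zero hvanish, add_zero]

theorem antitoneOn_binomialLowerTail (n x : ℕ) :
    AntitoneOn (binomialLowerTail n x) (Set.Icc 0 1) := by
  simp_rw [funext (binomialLowerTail_eq_eval n x)]
  refine antitoneOn_of_deriv_nonpos (convex_Icc 0 1) (Polynomial.continuousOn _)
    (Polynomial.differentiableOn _) fun q hq => ?_
  rw [interior_Icc] at hq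
  rw [Polynomial.deriv, derivative_sum_range_bernsteinPolynomial, eval_neg, neg_nonpos]
  simpa [bernsteinPolynomial] using mul_nonneg (Nat.cast_nonneg n)
    (choose_mul_pow_mul_one_sub_pow_nonneg (n - 1) x (Set.Ioo_subset_Icc_self hq))

theorem monotoneOn_binomialUpperTail (n x : ℕ) :
    MonotoneOn (binomialUpperTail n x) (Set.Icc 0 1) := by
  cases x with
  | zero =>
    have hconst : binomialUpperTail n 0 = fun _ => 1 := funext fun q => by
      rw [binomialUpperTail, ← Nat.range_succ_eq_Icc_zero]; exact binomialLowerTail_self n q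
    exact hconst ▸ monotoneOn_const
  | succ x =>
    intro a ha b hb hab
    linarith [antitoneOn_binomialLowerTail n x ha hb hab,
      binomialLowerTail_add_binomialUpperTail_succ n x a,
      binomialLowerTail_add_binomialUpperTail_succ n x b]

theorem sum_filter_lt_le_of_binomialUpperTail_le {n : ℕ} {p c : ℝ} {pL : ℕ → ℝ}
    (hp : p ∈ Set.Icc 0 1) (hc : 0 ≤ c)
    (hpL : ∀ X ≤ n, p < pL X → pL X ≤ 1 ∧ binomialUpperTail n X (pL X) ≤ c) :
    ∑ X ∈ range (n + 1) with p < pL X, (n.choose X : ℝ) * p ^ X * (1 - p) ^ (n - X)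
      ≤ c := by
  set A := {X ∈ range (n + 1) | p < pL X}
  rcases A.eq_empty_or_nonempty with hA | hA
  · rwa [hA, sum_empty]
  obtain ⟨hX₀n, hX₀⟩ : A.min' hA < n + 1 ∧ p < pL (A.min' hA) := by
    simpa [A] using A.min'_mem hA
  obtain ⟨hpL₁, hpLc⟩ := hpL _ (by omega) hX₀
  have hA_sub : A ⊆ Icc (A.min' hA) n := fun X hX =>
    mem_Icc.2 ⟨A.min'_le X hX, Nat.lt_succ_iff.1 (mem_range.1 (mem_filter.1 hX).1)⟩
  calc ∑ X ∈ A, (n.choose X : ℝ) * p ^ X * (1 - p) ^ (n - X)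
      ≤ binomialUpperTail n (A.min' hA) p :=
        sum_le_sum_of_subset_of_nonneg hA_sub fun k _ _ =>
          choose_mul_pow_mul_one_sub_pow_nonneg n k hp
    _ ≤ binomialUpperTail n (A.min' hA) (pL (A.min' hA)) :=
        monotoneOn_binomialUpperTail n _ hp ⟨hp.1.trans hX₀.le, hpL₁⟩ hX₀.le
    _ ≤ c := hpLc

theorem sum_filter_gt_le_of_binomialLowerTail_le {n : ℕ} {p c : ℝ} {pU : ℕ → ℝ}
    (hp : p ∈ Set.Icc 0 1) (hc : 0 ≤ c)
    (hpU : ∀ X ≤ n, pU X < p → 0 ≤ pU X ∧ binomialLowerTail n X (pU X) ≤ c) :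
    ∑ X ∈ range (n + 1) with pU X < p, (n.choose X : ℝ) * p ^ X * (1 - p) ^ (n - X)
      ≤ c := by
  set B := {X ∈ range (n + 1) | pU X < p}
  rcases B.eq_empty_or_nonempty with hB | hB
  · rwa [hB, sum_empty]
  obtain ⟨hX₁n, hX₁⟩ : B.max' hB < n + 1 ∧ pU (B.max' hB) < p := by
    simpa [B] using B.max'_mem hB
  obtain ⟨hpU₀, hpUc⟩ := hpU _ (by omega) hX₁
  have hB_sub : B ⊆ range (B.max' hB + 1) := fun X hX =>
    mem_range.2 (Nat.lt_succ_of_le (B.le_max' X hX))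
  calc ∑ X ∈ B, (n.choose X : ℝ) * p ^ X * (1 - p) ^ (n - X)
      ≤ binomialLowerTail n (B.max' hB) p :=
        sum_le_sum_of_subset_of_nonneg hB_sub fun k _ _ =>
          choose_mul_pow_mul_one_sub_pow_nonneg n k hp
    _ ≤ binomialLowerTail n (B.max' hB) (pU (B.max' hB)) :=
        antitoneOn_binomialLowerTail n _ ⟨hpU₀, hX₁.le.trans hp.2⟩ hp hX₁.le
    _ ≤ c := hpUc

theorem Finset.sum_le_sum_filter_add_sum_filter_add_sum_filter {ι : Type*} {s : Finset ι}
    {f : ι → ℝ} (hf : ∀ i ∈ s, 0 ≤ f i) {P Q R : ι → Prop} [DecidablePred P] [DecidablePred Q]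
    [DecidablePred R] (hPQR : ∀ i ∈ s, P i ∨ Q i ∨ R i) :
    ∑ i ∈ s, f i ≤ ∑ i ∈ s with P i, f i + ∑ i ∈ s with Q i, f i + ∑ i ∈ s with R i, f i := by
  simp only [sum_filter, ← sum_add_distrib]
  refine sum_le_sum fun i hi => ?_
  rcases hPQR i hi with h | h | h <;> split_ifs <;> linarith [hf i hi]

theorem clopper_pearson_coverage_general (n : ℕ) (p α : ℝ)
    (hp : p ∈ Set.Ioo (0:ℝ) 1) (hα0 : 0 < α)
    (pL pU : ℕ → ℝ)
    (hpL0 : pL 0 = 0) (hpUn : pU n = 1)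
    (hpL : ∀ X, 1 ≤ X → X ≤ n → pL X ∈ Set.Ioo (0:ℝ) 1 ∧
      ∑ k ∈ Finset.Icc X n, (n.choose k : ℝ) * (pL X) ^ k * (1 - pL X) ^ (n - k) = α / 2)
    (hpU : ∀ X, X ≤ n - 1 → pU X ∈ Set.Ioo (0:ℝ) 1 ∧
      ∑ k ∈ Finset.range (X + 1), (n.choose k : ℝ) * (pU X) ^ k * (1 - pU X) ^ (n - k) = α / 2) :
    1 - α ≤ ∑ X ∈ (Finset.range (n + 1)).filter (fun X => pL X ≤ p ∧ p ≤ pU X),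
      (n.choose X : ℝ) * p ^ X * (1 - p) ^ (n - X) := by
  have hp' : p ∈ Set.Icc 0 1 := Set.Ioo_subset_Icc_self hp
  have hlow :
      ∑ X ∈ range (n + 1) with p < pL X, (n.choose X : ℝ) * p ^ X * (1 - p) ^ (n - X) ≤ α / 2 := by
    refine sum_filter_lt_le_of_binomialUpperTail_le hp' (by positivity) fun X hXn hX => ?_
    obtain rfl | hX₁ := Nat.eq_zero_or_pos X
    · rw [hpL0] at hX; linarith [hp.1]
    obtain ⟨hIoo, htail⟩ := hpL X hX₁ hXn
    exact ⟨hIoo.2.le, htail.le⟩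
  have hup :
      ∑ X ∈ range (n + 1) with pU X < p, (n.choose X : ℝ) * p ^ X * (1 - p) ^ (n - X) ≤ α / 2 := by
    refine sum_filter_gt_le_of_binomialLowerTail_le hp' (by positivity) fun X hXn hX => ?_
    obtain rfl | hXn' := eq_or_lt_of_le hXn
    · rw [hpUn] at hX; linarith [hp.2]
    obtain ⟨hIoo, htail⟩ := hpU X (by omega)
    exact ⟨hIoo.1.le, htail.le⟩
  have hcases : ∀ X ∈ range (n + 1), (pL X ≤ p ∧ p ≤ pU X) ∨ p < pL X ∨ pU X < p :=
    fun X _ => by by_contra! h; linarith [h.1 h.2.1, h.2.2]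
  have hsplit := sum_le_sum_filter_add_sum_filter_add_sum_filter
    (fun k _ => choose_mul_pow_mul_one_sub_pow_nonneg n k hp') hcases
  rw [← binomialLowerTail, binomialLowerTail_self] at hsplit
  linarith

theorem clopper_pearson_coverage (n : ℕ) (hn : 1 ≤ n) (p α : ℝ)
    (hp : p ∈ Set.Ioo (0:ℝ) 1) (hα0 : 0 < α) (hα1 : α < 1)
    (pL pU : ℕ → ℝ)
    (hpL0 : pL 0 = 0) (hpUn : pU n = 1)
    (hpL : ∀ X, 1 ≤ X → X ≤ n → pL X ∈ Set.Ioo (0:ℝ) 1 ∧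
      ∑ k ∈ Finset.Icc X n, (n.choose k : ℝ) * (pL X) ^ k * (1 - pL X) ^ (n - k) = α / 2)
    (hpU : ∀ X, X ≤ n - 1 → pU X ∈ Set.Ioo (0:ℝ) 1 ∧
      ∑ k ∈ Finset.range (X + 1), (n.choose k : ℝ) * (pU X) ^ k * (1 - pU X) ^ (n - k) = α / 2) :
    1 - α ≤ ∑ X ∈ (Finset.range (n + 1)).filter (fun X => pL X ≤ p ∧ p ≤ pU X),
      (n.choose X : ℝ) * p ^ X * (1 - p) ^ (n - X) :=
  clopper_pearson_coverage_general n p α hp hα0 pL pU hpL0 hpUn hpL hpU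
end

section
/- The one-sided Clopper–Pearson upper bound has coverage at least 1-α: for every p ∈ (0,1), n ≥ 1, α ∈ (0,1), if X ~ Binomial(n,p) and p_U(X) is the unique solution in q of P(Bin(n,q) ≤ X) = α for X < n (with p_U(n) = 1), then P(p ≤ p_U(X)) ≥ 1-α. -/
/-!
Write `F_x(q) = P(Bin(n, q) ≤ x)`. Since `F_x' = -n · C(n-1, x) q^x (1-q)^(n-1-x) ≤ 0` on `[0, 1]`,
each `F_x` is antitone there. The outcomes `X` with `pU X < p` all lie below the largest one, `M`,
and `M < n` because `pU n = 1 ≥ p`; so their mass under `p` is at most `F_M(p) ≤ F_M(pU M) = α`.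
-/

open Finset Polynomial

namespace bernsteinPolynomial

variable {R : Type*} [CommRing R]

@[simp]
theorem eval_eq (n k : ℕ) (q : R) :
    (bernsteinPolynomial R n k).eval q = n.choose k * q ^ k * (1 - q) ^ (n - k) := by
  simp [bernsteinPolynomial]

theorem derivative_sum_range (n x : ℕ) :
    derivative (∑ k ∈ range (x + 1), bernsteinPolynomial R n k) =
      -n * bernsteinPolynomial R (n - 1) x := by
  induction x with
  | zero => simp [derivative_zero]
  | succ x ih => rw [sum_range_succ, derivative_add, ih, derivative_succ]; ring

end bernsteinPolynomial

theorem binomial_cdf_antitoneOn (n x : ℕ) :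
    AntitoneOn (fun q : ℝ => ∑ k ∈ range (x + 1), (n.choose k : ℝ) * q ^ k * (1 - q) ^ (n - k))
      (Set.Icc 0 1) := by
  set F := ∑ k ∈ range (x + 1), bernsteinPolynomial ℝ n k
  have hF : ∀ q : ℝ, F.eval q = ∑ k ∈ range (x + 1), (n.choose k : ℝ) * q ^ k * (1 - q) ^ (n - k) :=
    fun q => by simp [F, eval_finsetSum]
  simp_rw [← hF]
  refine antitoneOn_of_deriv_nonpos (convex_Icc 0 1) F.continuousOn F.differentiableOn ?_
  intro q hq
  rw [interior_Icc] at hq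
  have h1q : 0 ≤ 1 - q := sub_nonneg.2 hq.2.le
  have hq0 : 0 ≤ q := hq.1.le
  rw [Polynomial.deriv, bernsteinPolynomial.derivative_sum_range, eval_mul, eval_neg, eval_natCast,
    bernsteinPolynomial.eval_eq, neg_mul, neg_nonpos]
  positivity

theorem clopper_pearson_upper_bound_coverage_general (n : ℕ) (p α : ℝ)
    (hp : p ∈ Set.Ioo (0:ℝ) 1) (hα0 : 0 < α)
    (pU : ℕ → ℝ) (hpUn : pU n = 1)
    (hpU : ∀ X, X < n → pU X ∈ Set.Ioo (0:ℝ) 1 ∧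
      ∑ k ∈ Finset.range (X + 1), (n.choose k : ℝ) * (pU X) ^ k * (1 - pU X) ^ (n - k) = α) :
    1 - α ≤ ∑ X ∈ (Finset.range (n + 1)).filter (fun X => p ≤ pU X),
      (n.choose X : ℝ) * p ^ X * (1 - p) ^ (n - X) := by
  obtain ⟨hp0, hp1⟩ := hp
  set f : ℕ → ℝ := fun X => (n.choose X : ℝ) * p ^ X * (1 - p) ^ (n - X)
  have hf_nonneg : ∀ X, 0 ≤ f X := fun X => by
    have := sub_nonneg.2 hp1.le
    positivity
  have hf_sum : ∑ X ∈ range (n + 1), f X = 1 := by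
    simpa [eval_finsetSum] using congrArg (eval p) (bernsteinPolynomial.sum ℝ n)
  set S := (range (n + 1)).filter (fun X => ¬ p ≤ pU X)
  have h_miss : ∑ X ∈ S, f X ≤ α := by
    rcases S.eq_empty_or_nonempty with hS | hS
    · simp [hS, hα0.le]
    obtain ⟨M, hM_mem, hM_max⟩ : ∃ M ∈ S, ∀ X ∈ S, X ≤ M := ⟨S.max' hS, S.max'_mem hS, S.le_max'⟩
    obtain ⟨hM_range, hM_miss⟩ := mem_filter.1 hM_mem
    have hMn : M < n := lt_of_le_of_ne (mem_range_succ_iff.1 hM_range) fun h =>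
      hM_miss (by rw [h, hpUn]; exact hp1.le)
    obtain ⟨⟨hpU0, hpU1⟩, hpU_cdf⟩ := hpU M hMn
    calc ∑ X ∈ S, f X ≤ ∑ X ∈ range (M + 1), f X :=
          sum_le_sum_of_subset_of_nonneg (fun X hX => mem_range_succ_iff.2 (hM_max X hX))
            fun X _ _ => hf_nonneg X
      _ ≤ ∑ k ∈ range (M + 1), (n.choose k : ℝ) * pU M ^ k * (1 - pU M) ^ (n - k) :=
          binomial_cdf_antitoneOn n M ⟨hpU0.le, hpU1.le⟩ ⟨hp0.le, hp1.le⟩ (not_le.1 hM_miss).le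
      _ = α := hpU_cdf
  rw [← sum_filter_add_sum_filter_not _ (fun X => p ≤ pU X)] at hf_sum
  linarith

theorem clopper_pearson_upper_bound_coverage (n : ℕ) (hn : 1 ≤ n) (p α : ℝ)
    (hp : p ∈ Set.Ioo (0:ℝ) 1) (hα0 : 0 < α) (hα1 : α < 1)
    (pU : ℕ → ℝ) (hpUn : pU n = 1)
    (hpU : ∀ X, X < n → pU X ∈ Set.Ioo (0:ℝ) 1 ∧
      ∑ k ∈ Finset.range (X + 1), (n.choose k : ℝ) * (pU X) ^ k * (1 - pU X) ^ (n - k) = α) :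
    1 - α ≤ ∑ X ∈ (Finset.range (n + 1)).filter (fun X => p ≤ pU X),
      (n.choose X : ℝ) * p ^ X * (1 - p) ^ (n - X) :=
  clopper_pearson_upper_bound_coverage_general n p α hp hα0 pU hpUn hpU
end
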